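/- (Proof Step 9b: no cycle of length 3.) Let V, E satisfy E1–E3, R1 and C1, and let F satisfy F1–F6. For all points u1, v1, w1, x1, w2, x2, x3: it is impossible that deleting(u1,v1,w1,x1), F(w1,x1), deleting(v1,w1,w2,x2), F(w2,x2), inside(u1,v1,w1,w2), deleting(v1,w2,u1,x3) and F(u1,x3) all hold simultaneously. -/

import Mathlib

/-! The chord `w₁x₁` of the triangle `u₁v₁w₁` crosses `u₁v₁`, so it separates `u₁` from `v₁`.
If `w₂` lies on the `u₁`-side of it, the edge `w₂x₂`, which reaches the side `v₁w₁`, has to cross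
the chord inside the triangle; if `w₂` lies on the `v₁`-side, the edge `u₁x₃`, which reaches
`v₁w₂`, has to. Inside the triangle the line of the chord meets only the segment `w₁x₁`, so two
`F`-edges would meet at a point interior to one of them, which F3 and F4 forbid. If `w₂` lies on
the line `u₁v₁`, then so does `x₃`, and `u₁x₃` passes through the vertex `w₂` or `v₁` (F4). -/

/-- Points are elements of ℝ². -/
abbrev Pt := ℝ × ℝ

/-- det((a,b),(c,d)) = a·d − b·c. -/
def pdet (p q : Pt) : ℝ := p.1 * q.2 - p.2 * q.1

/-- `left u v w`: w lies strictly to the left of the oriented line through u and v,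
or on the open ray from u through v. -/
def left (u v w : Pt) : Prop :=
  0 < pdet (v - u) (w - u) ∨ ∃ t : ℝ, 0 < t ∧ w - u = t • (v - u)

/-- `inter u v w x`: the closed segments uv and wx share a point that is not an
endpoint of both. -/
def inter (u v w x : Pt) : Prop :=
  ¬(u = w ∧ v = x) ∧ ¬(u = x ∧ v = w) ∧
  ((left u v w ∧ left v u x) ∨ (left u v x ∧ left v u w)) ∧
  ((left w x u ∧ left x w v) ∨ (left w x v ∧ left x w u))

/-- `inside u v w x`: x lies in the closed triangle Δuvw but is distinct from u, v, w. -/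
def inside (u v w x : Pt) : Prop := left u v x ∧ left v w x ∧ left w u x

/-- `deleting E F u v w x`: the edge wx prohibits that uv is in F. -/
def deleting (E F : Pt → Pt → Prop) (u v w x : Pt) : Prop :=
  E u v ∧ E w x ∧ inter u v w x ∧ E u w ∧ E v w ∧
    ((¬ E u x ∧ ¬ E v x) ∨ F w x)

/-- A finite path a = p₀, p₁, …, pₙ = b with R(pᵢ, pᵢ₊₁) for all i < n. -/
def FPath (R : Pt → Pt → Prop) (a b : Pt) : Prop :=
  ∃ (n : ℕ) (p : ℕ → Pt), p 0 = a ∧ p n = b ∧ ∀ i < n, R (p i) (p (i + 1))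

/-- `R` connects `V`: any two vertices are joined by a finite `R`-path. -/
def Connects (R : Pt → Pt → Prop) (V : Pt → Prop) : Prop :=
  ∀ a b, V a → V b → FPath R a b

section Orientation

def orient (a b c : Pt) : ℝ := pdet (b - a) (c - a)

variable {a b c d s t z : Pt}

lemma orient_apply (a b c : Pt) :
    orient a b c = (b.1 - a.1) * (c.2 - a.2) - (b.2 - a.2) * (c.1 - a.1) := rfl

@[simp] lemma orient_self_left (a b : Pt) : orient a b a = 0 := by
  simp only [orient_apply]; ring

@[simp] lemma orient_self_right (a b : Pt) : orient a b b = 0 := by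
  simp only [orient_apply]; ring

lemma orient_swap (a b c : Pt) : orient b a c = -orient a b c := by
  simp only [orient_apply]; ring

lemma orient_swap_right (a b c : Pt) : orient a c b = -orient a b c := by
  simp only [orient_apply]; ring

lemma orient_cyclic (a b c : Pt) : orient b c a = orient a b c := by
  simp only [orient_apply]; ring

lemma orient_add_orient_add_orient (a b c z : Pt) :
    orient a b z + orient b c z + orient c a z = orient a b c := by
  simp only [orient_apply]; ring

lemma orient_add_smul_sub (a b s t : Pt) (θ : ℝ) :
    orient a b (s + θ • (t - s)) = (1 - θ) * orient a b s + θ * orient a b t := by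
  simp only [orient_apply, Prod.fst_add, Prod.snd_add, Prod.smul_fst, Prod.smul_snd,
    Prod.fst_sub, Prod.snd_sub, smul_eq_mul]
  ring

lemma orient_smul_add_smul (a b s t : Pt) {α β : ℝ} (h : α + β = 1) :
    orient a b (α • s + β • t) = α * orient a b s + β * orient a b t := by
  obtain rfl : β = 1 - α := by linarith
  simp only [orient_apply, Prod.fst_add, Prod.snd_add, Prod.smul_fst, Prod.smul_snd,
    smul_eq_mul]
  ring

lemma orient_eq_zero_of_mem_segment (h : z ∈ segment ℝ a b) : orient a b z = 0 := by
  rw [segment_eq_image'] at h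
  obtain ⟨θ, -, rfl⟩ := h
  simp [orient_add_smul_sub]

lemma exists_orient_eq_of_mem_segment (a b : Pt) (h : z ∈ segment ℝ s t) :
    ∃ θ ∈ Set.Icc (0 : ℝ) 1, orient a b z = (1 - θ) * orient a b s + θ * orient a b t := by
  rw [segment_eq_image'] at h
  obtain ⟨θ, hθ, rfl⟩ := h
  exact ⟨θ, hθ, orient_add_smul_sub a b s t θ⟩

-- `(f × g) • e = (e × g) • f - (e × f) • g` for `e = b - a`, `f = c - a`, `g = d - a`.
lemma orient_eq_zero_of_collinear (hab : a ≠ b) (hc : orient a b c = 0)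
    (hd : orient a b d = 0) : orient a c d = 0 := by
  rw [orient_apply] at *
  have h1 : (b.1 - a.1) * ((c.1 - a.1) * (d.2 - a.2) - (c.2 - a.2) * (d.1 - a.1)) = 0 := by
    linear_combination (c.1 - a.1) * hd - (d.1 - a.1) * hc
  have h2 : (b.2 - a.2) * ((c.1 - a.1) * (d.2 - a.2) - (c.2 - a.2) * (d.1 - a.1)) = 0 := by
    linear_combination (c.2 - a.2) * hd - (d.2 - a.2) * hc
  by_contra hne
  apply hab
  ext
  · linarith [(mul_eq_zero.mp h1).resolve_right hne]
  · linarith [(mul_eq_zero.mp h2).resolve_right hne]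

lemma exists_eq_add_smul_of_orient_eq_zero (hab : a ≠ b) (h : orient a b z = 0) :
    ∃ k : ℝ, z = a + k • (b - a) := by
  have hpos : 0 < (b.1 - a.1) ^ 2 + (b.2 - a.2) ^ 2 := by
    by_contra hle
    apply hab
    ext <;> nlinarith [sq_nonneg (b.1 - a.1), sq_nonneg (b.2 - a.2)]
  rw [orient_apply] at h
  refine ⟨((b.1 - a.1) * (z.1 - a.1) + (b.2 - a.2) * (z.2 - a.2)) /
    ((b.1 - a.1) ^ 2 + (b.2 - a.2) ^ 2), ?_⟩
  ext <;> simp only [Prod.fst_add, Prod.snd_add, Prod.smul_fst, Prod.smul_snd, Prod.fst_sub,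
    Prod.snd_sub, smul_eq_mul] <;> field_simp
  · linear_combination -(b.2 - a.2) * h
  · linear_combination (b.1 - a.1) * h

end Orientation

section Reals

variable {A B θ : ℝ}

lemma mem_Icc_of_lerp_eq_zero (h : (1 - θ) * A + θ * B = 0) (hAB : A * B ≤ 0)
    (hne : ¬(A = 0 ∧ B = 0)) : θ ∈ Set.Icc (0 : ℝ) 1 := by
  have hAB' : A - B ≠ 0 := fun h' =>
    hne ⟨by nlinarith [sub_eq_zero.mp h'], by nlinarith [sub_eq_zero.mp h']⟩
  have hsq : 0 < (A - B) ^ 2 := by positivity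
  have h0 : θ * (A - B) ^ 2 = A ^ 2 - A * B := by linear_combination (B - A) * h
  have h1 : (1 - θ) * (A - B) ^ 2 = B ^ 2 - A * B := by linear_combination (A - B) * h
  exact ⟨nonneg_of_mul_nonneg_left (by nlinarith) hsq,
    sub_nonneg.mp (nonneg_of_mul_nonneg_left (by nlinarith) hsq)⟩

lemma exists_lerp_eq_zero (hA : A ≠ 0) (hAB : A * B ≤ 0) :
    ∃ θ : ℝ, 0 < θ ∧ θ ≤ 1 ∧ (1 - θ) * A + θ * B = 0 := by
  have hne : A - B ≠ 0 := fun h => hA (by nlinarith [sub_eq_zero.mp h])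
  have hθ : (1 - A / (A - B)) * A + A / (A - B) * B = 0 := by
    field_simp; ring
  obtain ⟨h0, h1⟩ := mem_Icc_of_lerp_eq_zero hθ hAB (fun h => hA h.1)
  exact ⟨A / (A - B), h0.lt_of_ne' (div_ne_zero hA hne), h1, hθ⟩

lemma mul_neg_of_lerp_eq_zero (hA : A ≠ 0) (h0 : 0 < θ) (h1 : θ < 1)
    (h : (1 - θ) * A + θ * B = 0) : A * B < 0 := by
  have hAA : 0 < A * A := mul_self_pos.mpr hA
  have : θ * (A * B) = -((1 - θ) * (A * A)) := by linear_combination A * h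
  nlinarith [mul_pos (sub_pos.mpr h1) hAA]

end Reals

section Left

variable {a b c d o e z : Pt} {α β γ χ : ℝ}

lemma orient_nonneg_of_left (h : left a b c) : 0 ≤ orient a b c := by
  rcases h with h | ⟨t, -, ht⟩
  · exact h.le
  · rw [sub_eq_iff_eq_add'.mp ht, orient_add_smul_sub]
    simp

lemma orient_nonpos_of_left_swap (h : left b a c) : orient a b c ≤ 0 := by
  linarith [orient_nonneg_of_left h, orient_swap a b c]

lemma eq_of_left_self (h : left a b a) : a = b := by
  rcases h with h | ⟨t, ht, h⟩
  · exact absurd (show 0 < orient a b a from h) (by simp)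
  · rw [sub_self, eq_comm, smul_eq_zero, sub_eq_zero] at h
    exact (h.resolve_left ht.ne').symm

lemma left_of_mem_openSegment (h : z ∈ openSegment ℝ a b) : left a b z := by
  rw [openSegment_eq_image'] at h
  obtain ⟨θ, ⟨hθ, -⟩, rfl⟩ := h
  exact Or.inr ⟨θ, hθ, add_sub_cancel_left a _⟩

lemma left_iff_of_eq_add_smul (he : e ≠ 0) (hαβ : α ≠ β) (ha : a = o + α • e)
    (hb : b = o + β • e) (hc : c = o + γ • e) : left a b c ↔ 0 < (γ - α) * (β - α) := by
  subst ha hb hc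
  have hba : o + β • e - (o + α • e) = (β - α) • e := by module
  have hca : o + γ • e - (o + α • e) = (γ - α) • e := by module
  have hβα : β - α ≠ 0 := sub_ne_zero.mpr hαβ.symm
  unfold left
  rw [hba, hca]
  have hdet : pdet ((β - α) • e) ((γ - α) • e) = 0 := by
    simp only [pdet, Prod.smul_fst, Prod.smul_snd, smul_eq_mul]; ring
  simp only [hdet, lt_irrefl, false_or, smul_smul]
  constructor
  · rintro ⟨t, ht, h⟩
    rw [smul_left_injective ℝ he h]
    nlinarith [mul_self_pos.mpr hβα]
  · intro h
    refine ⟨(γ - α) / (β - α), ?_, by rw [div_mul_cancel₀ _ hβα]⟩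
    have : (γ - α) / (β - α) = (γ - α) * (β - α) / (β - α) ^ 2 := by field_simp
    rw [this]
    positivity

lemma add_smul_mem_openSegment (o e : Pt) (hα : 0 < α) (hαχ : α < χ) :
    o + α • e ∈ openSegment ℝ o (o + χ • e) := by
  have hχ : 0 < χ := hα.trans hαχ
  rw [openSegment_eq_image']
  refine ⟨α / χ, ⟨div_pos hα hχ, (div_lt_one hχ).mpr hαχ⟩, ?_⟩
  simp only [add_sub_cancel_left, smul_smul, div_mul_cancel₀ α hχ.ne']

lemma orient_mul_nonpos_of_left (h : (left a b c ∧ left b a d) ∨ (left a b d ∧ left b a c)) :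
    orient a b c * orient a b d ≤ 0 := by
  rcases h with ⟨h1, h2⟩ | ⟨h1, h2⟩
  · exact mul_nonpos_of_nonneg_of_nonpos (orient_nonneg_of_left h1) (orient_nonpos_of_left_swap h2)
  · exact mul_nonpos_of_nonpos_of_nonneg (orient_nonpos_of_left_swap h2) (orient_nonneg_of_left h1)

lemma left_of_orient_mul_neg (h : orient a b c * orient a b d < 0) :
    (left a b c ∧ left b a d) ∨ (left a b d ∧ left b a c) := by
  have key : ∀ {c d : Pt}, 0 < orient a b c → orient a b d < 0 → left a b c ∧ left b a d :=
    fun hc hd => ⟨Or.inl hc, Or.inl (show 0 < orient b a _ by rw [orient_swap]; linarith)⟩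
  rcases mul_neg_iff.mp h with ⟨hc, hd⟩ | ⟨hc, hd⟩
  · exact Or.inl (key hc hd)
  · exact Or.inr (key hd hc)

end Left

section Inter

variable {a b c d : Pt}

lemma inter_of_orient_mul_neg (h1 : orient a b c * orient a b d < 0)
    (h2 : orient c d a * orient c d b < 0) : inter a b c d := by
  refine ⟨?_, ?_, left_of_orient_mul_neg h1, left_of_orient_mul_neg h2⟩ <;>
    rintro ⟨rfl, -⟩ <;> simp at h1

lemma inter.orient_mul_nonpos (h : inter a b c d) : orient a b c * orient a b d ≤ 0 :=
  orient_mul_nonpos_of_left h.2.2.1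

lemma inter.orient_mul_nonpos' (h : inter a b c d) : orient c d a * orient c d b ≤ 0 :=
  orient_mul_nonpos_of_left h.2.2.2

lemma inter.ne_of_orient_pos (h : inter a b c d) (hc : 0 < orient a b c) : d ≠ a ∧ d ≠ b := by
  constructor <;> rintro rfl
  · rcases h.2.2.2 with ⟨-, h'⟩ | ⟨-, h'⟩
    · linarith [orient_nonneg_of_left h', orient_swap_right d b c]
    · obtain rfl := eq_of_left_self h'
      simp at hc
  · rcases h.2.2.1 with ⟨-, h'⟩ | ⟨-, h'⟩
    · obtain rfl := eq_of_left_self h'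
      simp [orient_apply] at hc
    · linarith [orient_nonpos_of_left_swap h']

lemma inter.exists_mem_segment (h : inter a b c d) (hc : 0 < orient a b c) :
    ∃ z ∈ segment ℝ a b, z ∈ segment ℝ c d := by
  have hd : orient a b d ≤ 0 := nonpos_of_mul_nonpos_right h.orient_mul_nonpos hc
  have hcd : c ≠ d := by rintro rfl; linarith
  have hab : a ≠ b := by rintro rfl; simp [orient_apply] at hc
  obtain ⟨ρ, hρ0, hρ1, hρ⟩ := exists_lerp_eq_zero hc.ne' h.orient_mul_nonpos
  have hz : c + ρ • (d - c) ∈ segment ℝ c d := by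
    rw [segment_eq_image']
    exact ⟨ρ, ⟨hρ0.le, hρ1⟩, rfl⟩
  obtain ⟨α, hα⟩ := exists_eq_add_smul_of_orient_eq_zero hab
    ((orient_add_smul_sub a b c d ρ).trans hρ)
  have hα' : (1 - α) * orient c d a + α * orient c d b = 0 := by
    rw [← orient_add_smul_sub, ← hα]
    exact orient_eq_zero_of_mem_segment hz
  have hne : ¬(orient c d a = 0 ∧ orient c d b = 0) := fun ⟨ha, hb⟩ => by
    linarith [orient_eq_zero_of_collinear hcd ha hb, orient_cyclic b c a, orient_cyclic a b c]
  refine ⟨_, ?_, hz⟩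
  rw [segment_eq_image', hα]
  exact ⟨α, mem_Icc_of_lerp_eq_zero hα' h.orient_mul_nonpos' hne, rfl⟩

end Inter

section Triangle

def tri (u v w : Pt) : Set Pt :=
  {z | 0 ≤ orient u v z ∧ 0 ≤ orient v w z ∧ 0 ≤ orient w u z}

variable {a b s t u v w x z : Pt}

lemma convex_tri (u v w : Pt) : Convex ℝ (tri u v w) := by
  intro s hs t ht α β hα hβ hαβ
  obtain ⟨hs1, hs2, hs3⟩ := hs
  obtain ⟨ht1, ht2, ht3⟩ := ht
  simp only [tri, Set.mem_ofPred_eq, orient_smul_add_smul _ _ _ _ hαβ]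
  exact ⟨by positivity, by positivity, by positivity⟩

lemma left_mem_tri (h : 0 ≤ orient u v w) : u ∈ tri u v w :=
  ⟨by simp, by rwa [orient_cyclic], by simp⟩

lemma mid_mem_tri (h : 0 ≤ orient u v w) : v ∈ tri u v w :=
  ⟨by simp, by simp, by rwa [orient_cyclic, orient_cyclic]⟩

lemma right_mem_tri (h : 0 ≤ orient u v w) : w ∈ tri u v w :=
  ⟨h, by simp, by simp⟩

lemma inside.mem_tri (h : inside u v w x) : x ∈ tri u v w :=
  ⟨orient_nonneg_of_left h.1, orient_nonneg_of_left h.2.1, orient_nonneg_of_left h.2.2⟩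

lemma mem_segment_of_mem_tri (hw : 0 < orient u v w) (hx : orient u v x ≤ 0)
    (hz : z ∈ tri u v w) (hzS : orient w x z = 0) : z ∈ segment ℝ w x := by
  have hwx : w ≠ x := by rintro rfl; linarith
  obtain ⟨θ, rfl⟩ := exists_eq_add_smul_of_orient_eq_zero hwx hzS
  obtain ⟨h1, h2, h3⟩ := hz
  simp only [orient_add_smul_sub, orient_self_left, orient_self_right, mul_zero, zero_add]
    at h1 h2 h3
  have hsum := orient_add_orient_add_orient u v w x
  rw [segment_eq_image']
  refine ⟨θ, ⟨?_, ?_⟩, rfl⟩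
  · nlinarith
  · nlinarith

lemma exists_mem_openSegment_orient_eq_zero {c : Pt} (hs : orient a b s ≠ 0)
    (hsc : orient a b s * orient a b c ≤ 0) (hc : c ∈ segment ℝ s t)
    (hct : orient a b c ≠ 0 ∨ c ≠ t) :
    ∃ z ∈ segment ℝ s c, z ∈ openSegment ℝ s t ∧ orient a b z = 0 := by
  obtain ⟨ρ, hρ0, hρ1, hρ⟩ := exists_lerp_eq_zero hs hsc
  rw [segment_eq_image'] at hc
  obtain ⟨δ, ⟨hδ0, hδ1⟩, rfl⟩ := hc
  refine ⟨_, ?_, ?_, (orient_add_smul_sub a b _ _ ρ).trans hρ⟩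
  · rw [segment_eq_image']
    exact ⟨ρ, ⟨hρ0.le, hρ1⟩, rfl⟩
  rw [openSegment_eq_image']
  refine ⟨ρ * δ, ⟨?_, ?_⟩, by simp only [add_sub_cancel_left, smul_smul]⟩
  · refine mul_pos hρ0 (hδ0.lt_of_ne' fun hδ => ?_)
    simp only [hδ, zero_smul, add_zero] at hsc
    nlinarith [mul_self_pos.mpr hs]
  · by_contra! h
    obtain ⟨rfl, rfl⟩ : ρ = 1 ∧ δ = 1 := ⟨by nlinarith, by nlinarith⟩
    simp only [one_smul, add_sub_cancel, ne_eq, not_true_eq_false, or_false] at hct hρ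
    exact hct (by linarith)

end Triangle

section Graph

variable {V : Pt → Prop} {F : Pt → Pt → Prop} {a b c d p s t u v w x y z : Pt}

lemma not_F_of_mem_openSegment (hF4 : ∀ u v w, left u v w ∧ left v u w ∧ V w → ¬ F u v)
    (hz : V z) (h : z ∈ openSegment ℝ a b) : ¬ F a b :=
  hF4 a b z ⟨left_of_mem_openSegment h,
    left_of_mem_openSegment (openSegment_symm ℝ a b ▸ h), hz⟩

lemma false_of_F_cross (hF3 : ∀ u v w x, F u v ∧ F w x → ¬ inter u v w x)
    (hF4 : ∀ u v w, left u v w ∧ left v u w ∧ V w → ¬ F u v)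
    (hab : F a b) (hcd : F c d) (hc : V c) (hd : V d) (hza : z ∈ openSegment ℝ a b)
    (hzc : z ∈ segment ℝ c d) (ha : orient c d a ≠ 0) : False := by
  have hzab : orient a b z = 0 :=
    orient_eq_zero_of_mem_segment (openSegment_subset_segment ℝ a b hza)
  have hzcd : orient c d z = 0 := orient_eq_zero_of_mem_segment hzc
  rw [← insert_endpoints_openSegment] at hzc
  rcases hzc with rfl | rfl | hzc
  · exact not_F_of_mem_openSegment hF4 hc hza hab
  · exact not_F_of_mem_openSegment hF4 hd hza hab
  have hab' : a ≠ b := by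
    rintro rfl
    rw [openSegment_same, Set.mem_singleton_iff] at hza
    exact ha (hza ▸ hzcd)
  rw [openSegment_eq_image'] at hza hzc
  obtain ⟨θ, ⟨hθ0, hθ1⟩, rfl⟩ := hza
  obtain ⟨μ, ⟨hμ0, hμ1⟩, hμ⟩ := hzc
  rw [orient_add_smul_sub] at hzcd
  rw [← hμ, orient_add_smul_sub] at hzab
  have hc0 : orient a b c ≠ 0 := fun hc0 => by
    have hd0 : orient a b d = 0 := by simpa [hc0, hμ0.ne'] using hzab
    exact ha (by linarith [orient_eq_zero_of_collinear hab' hc0 hd0, orient_cyclic a c d])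
  exact hF3 a b c d ⟨hab, hcd⟩ (inter_of_orient_mul_neg
    (mul_neg_of_lerp_eq_zero hc0 hμ0 hμ1 hzab) (mul_neg_of_lerp_eq_zero ha hθ0 hθ1 hzcd))

lemma orient_ne_zero_of_mem_tri (hF4 : ∀ u v w, left u v w ∧ left v u w ∧ V w → ¬ F u v)
    (hwx : F w x) (hy : V y) (hyT : y ∈ tri u v w) (hyw : y ≠ w) (hyx : y ≠ x)
    (hw : 0 < orient u v w) (hx : orient u v x ≤ 0) : orient w x y ≠ 0 := fun h =>
  not_F_of_mem_openSegment hF4 hy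
    (mem_openSegment_of_ne_left_right hyw.symm hyx.symm (mem_segment_of_mem_tri hw hx hyT h)) hwx

lemma false_of_F_crosses_chord (hF3 : ∀ u v w x, F u v ∧ F w x → ¬ inter u v w x)
    (hF4 : ∀ u v w, left u v w ∧ left v u w ∧ V w → ¬ F u v)
    (hwx : F w x) (hst : F s t) (hVw : V w) (hVx : V x)
    (hw : 0 < orient u v w) (hx : orient u v x ≤ 0) (hs : s ∈ tri u v w) (hc : c ∈ tri u v w)
    (hcst : c ∈ segment ℝ s t) (hSs : orient w x s ≠ 0)
    (hSsc : orient w x s * orient w x c ≤ 0) (hct : orient w x c ≠ 0 ∨ c ≠ t) : False := by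
  obtain ⟨z, hz_sc, hz_st, hSz⟩ := exists_mem_openSegment_orient_eq_zero hSs hSsc hcst hct
  have hzT : z ∈ tri u v w := (convex_tri u v w).segment_subset hs hc hz_sc
  exact false_of_F_cross hF3 hF4 hst hwx hVw hVx hz_st (mem_segment_of_mem_tri hw hx hzT hSz) hSs

lemma false_of_inter_of_opposite_side (hF3 : ∀ u v w x, F u v ∧ F w x → ¬ inter u v w x)
    (hF4 : ∀ u v w, left u v w ∧ left v u w ∧ V w → ¬ F u v)
    (hwx : F w x) (hpt : F p t) (hVw : V w) (hVx : V x)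
    (hw : 0 < orient u v w) (hx : orient u v x ≤ 0) (hp : p ∈ tri u v w)
    (hSv : orient w x v ≠ 0) (hSpv : orient w x p * orient w x v < 0) (hI : inter v w p t) :
    False := by
  have hvw : v ≠ w := by rintro rfl; simp at hw
  have hvwp : 0 < orient v w p := by
    refine hp.2.1.lt_of_ne' fun h0 => ?_
    obtain ⟨k, rfl⟩ := exists_eq_add_smul_of_orient_eq_zero hvw h0
    have h3 := hp.2.2
    rw [orient_add_smul_sub, orient_self_left, orient_cyclic, orient_cyclic] at h3
    rw [orient_add_smul_sub, orient_self_left] at hSpv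
    nlinarith [mul_self_pos.mpr hSv]
  obtain ⟨c, hc_vw, hc_pt⟩ := hI.exists_mem_segment hvwp
  have hcT : c ∈ tri u v w :=
    (convex_tri u v w).segment_subset (mid_mem_tri hw.le) (right_mem_tri hw.le) hc_vw
  rw [segment_eq_image'] at hc_vw
  obtain ⟨γ, ⟨hγ0, hγ1⟩, rfl⟩ := hc_vw
  have hSc := orient_add_smul_sub w x v w γ
  rw [orient_self_left, mul_zero, add_zero] at hSc
  refine false_of_F_crosses_chord hF3 hF4 hwx hpt hVw hVx hw hx hp hcT hc_pt
    (left_ne_zero_of_mul hSpv.ne) (by rw [hSc]; nlinarith) ?_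
  by_contra! h
  obtain rfl : γ = 1 := by
    rw [hSc] at h
    linarith [(mul_eq_zero.mp h.1).resolve_right hSv]
  exact (hI.ne_of_orient_pos hvwp).2 (by simpa using h.2.symm)

lemma false_of_inter_of_same_side (hF3 : ∀ u v w x, F u v ∧ F w x → ¬ inter u v w x)
    (hF4 : ∀ u v w, left u v w ∧ left v u w ∧ V w → ¬ F u v)
    (hwx : F w x) (hut : F u t) (hVw : V w) (hVx : V x)
    (hw : 0 < orient u v w) (hx : orient u v x ≤ 0) (hp : p ∈ tri u v w)
    (hup : 0 < orient u v p) (hSuv : orient w x u * orient w x v < 0)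
    (hSpv : 0 < orient w x p * orient w x v) (hI : inter v p u t) : False := by
  obtain ⟨c, hc_vp, hc_ut⟩ := hI.exists_mem_segment (by rwa [orient_cyclic])
  obtain ⟨γ, ⟨hγ0, hγ1⟩, hSc⟩ := exists_orient_eq_of_mem_segment w x hc_vp
  have hScv : 0 < orient w x c * orient w x v := by
    have hvv := mul_self_pos.mpr (right_ne_zero_of_mul hSuv.ne)
    rw [hSc]
    rcases hγ0.eq_or_lt with rfl | hγ0
    · nlinarith
    · nlinarith [mul_pos hγ0 hSpv]
  refine false_of_F_crosses_chord hF3 hF4 hwx hut hVw hVx hw hx (left_mem_tri hw.le)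
    ((convex_tri u v w).segment_subset (mid_mem_tri hw.le) hp hc_vp) hc_ut
    (left_ne_zero_of_mul hSuv.ne) ?_ (Or.inl (left_ne_zero_of_mul hScv.ne'))
  nlinarith [mul_self_pos.mpr (right_ne_zero_of_mul hSuv.ne)]

lemma false_of_inter_of_collinear (hF4 : ∀ u v w, left u v w ∧ left v u w ∧ V w → ¬ F u v)
    (hut : F u t) (hVp : V p) (hVv : V v) (hl : left u v p) (h0 : orient u v p = 0)
    (hpv : p ≠ v) (hI : inter v p u t) : False := by
  obtain ⟨a, ha, hpa⟩ : ∃ a : ℝ, 0 < a ∧ p - u = a • (v - u) :=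
    hl.resolve_left fun h => h.ne' h0
  obtain rfl := sub_eq_iff_eq_add'.mp hpa
  have he : v - u ≠ 0 := fun he => hpv (by rw [he, smul_zero, add_zero, (sub_eq_zero.mp he)])
  have ha1 : a ≠ 1 := by rintro rfl; simp at hpv
  have hlin : orient u t v = 0 := by
    have h := hI.orient_mul_nonpos'
    rw [orient_add_smul_sub, orient_self_left] at h
    by_contra hX
    nlinarith [mul_self_pos.mpr hX]
  have huv : u ≠ v := fun h => he (by rw [h, sub_self])
  obtain ⟨χ, rfl⟩ := exists_eq_add_smul_of_orient_eq_zero huv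
    (by rw [orient_swap_right, hlin, neg_zero])
  have hu : u = u + (0 : ℝ) • (v - u) := by simp
  have hv : v = u + (1 : ℝ) • (v - u) := by simp
  rcases hI.2.2.1 with ⟨h1, h2⟩ | ⟨h1, h2⟩
  · rw [left_iff_of_eq_add_smul he (Ne.symm ha1) hv rfl hu] at h1
    rw [left_iff_of_eq_add_smul he ha1 rfl hv rfl] at h2
    exact not_F_of_mem_openSegment hF4 hVp
      (add_smul_mem_openSegment u (v - u) ha (by nlinarith)) hut
  · rw [left_iff_of_eq_add_smul he (Ne.symm ha1) hv rfl rfl] at h1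
    rw [left_iff_of_eq_add_smul he ha1 rfl hv hu] at h2
    have := add_smul_mem_openSegment u (v - u) one_pos (show (1 : ℝ) < χ by nlinarith)
    rw [← hv] at this
    exact not_F_of_mem_openSegment hF4 hVv this hut

end Graph

theorem proof_step9b_general
    (V : Pt → Prop) (E F : Pt → Pt → Prop)
    (hE1 : ∀ u, ¬ E u u)
    (hE3 : ∀ u v, E u v → V u ∧ V v)
    (hF3 : ∀ u v w x, F u v ∧ F w x → ¬ inter u v w x)
    (hF4 : ∀ u v w, left u v w ∧ left v u w ∧ V w → ¬ F u v)
    (u1 v1 w1 x1 w2 x2 x3 : Pt)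
    (h1 : deleting E F u1 v1 w1 x1)
    (h2 : F w1 x1)
    (h3 : deleting E F v1 w1 w2 x2)
    (h4 : F w2 x2)
    (h5 : inside u1 v1 w1 w2)
    (h6 : deleting E F v1 w2 u1 x3)
    (h7 : F u1 x3) :
    False := by
  obtain ⟨hEuv, hEwx, hIuvwx, hEuw, hEvw, -⟩ := h1
  obtain ⟨-, hEpx, hIvwpx, hEvp, hEwp, -⟩ := h3
  obtain ⟨-, -, hIvpux, -⟩ := h6
  have hne : ∀ {a b}, E a b → a ≠ b := fun h hab => hE1 _ (hab ▸ h)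
  rcases (orient_nonneg_of_left h5.1).eq_or_lt with h0 | hup
  · exact false_of_inter_of_collinear hF4 h7 (hE3 _ _ hEpx).1 (hE3 _ _ hEuv).2 h5.1 h0.symm
      (hne hEvp).symm hIvpux
  have hp := h5.mem_tri
  have hw : 0 < orient u1 v1 w1 := by
    linarith [orient_add_orient_add_orient u1 v1 w1 w2, hp.2.1, hp.2.2]
  have hx : orient u1 v1 x1 ≤ 0 := nonpos_of_mul_nonpos_right hIuvwx.orient_mul_nonpos hw
  obtain ⟨hxu, hxv⟩ := hIuvwx.ne_of_orient_pos hw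
  have hS : ∀ {y}, V y → y ∈ tri u1 v1 w1 → y ≠ w1 → y ≠ x1 → orient w1 x1 y ≠ 0 :=
    fun hy hyT hyw hyx => orient_ne_zero_of_mem_tri hF4 h2 hy hyT hyw hyx hw hx
  have hSu := hS (hE3 _ _ hEuv).1 (left_mem_tri hw.le) (hne hEuw) hxu.symm
  have hSv := hS (hE3 _ _ hEuv).2 (mid_mem_tri hw.le) (hne hEvw) hxv.symm
  have hSuv := hIuvwx.orient_mul_nonpos'.lt_of_ne (mul_ne_zero hSu hSv)
  obtain ⟨hVw, hVx⟩ := hE3 _ _ hEwx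
  rcases lt_trichotomy (orient w1 x1 w2 * orient w1 x1 v1) 0 with hpv | hpv | hpv
  · exact false_of_inter_of_opposite_side hF3 hF4 h2 h4 hVw hVx hw hx hp hSv hpv hIvwpx
  · refine hS (hE3 _ _ hEpx).1 hp (hne hEwp).symm ?_ ((mul_eq_zero.mp hpv).resolve_right hSv)
    rintro rfl
    linarith
  · exact false_of_inter_of_same_side hF3 hF4 h2 h7 hVw hVx hw hx hp hup hSuv hpv hIvpux

theorem proof_step9b
    (V : Pt → Prop) (E F : Pt → Pt → Prop)
    (hE1 : ∀ u, ¬ E u u)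
    (hE2 : ∀ u v, E u v → E v u)
    (hE3 : ∀ u v, E u v → V u ∧ V v)
    (hR1 : ∀ u v w x, E u v ∧ E w x ∧ inter u v w x → E u w ∨ E v x)
    (hC1 : ∀ u v w x, inside u v w x ∧ E u v ∧ E v w ∧ E w u ∧ V x → E u x)
    (hF1 : ∀ u v, F u v → F v u)
    (hF2 : ∀ u v, F u v → E u v)
    (hF3 : ∀ u v w x, F u v ∧ F w x → ¬ inter u v w x)
    (hF4 : ∀ u v w, left u v w ∧ left v u w ∧ V w → ¬ F u v)
    (hF5 : ∀ u v w x, F u v ∧ E w x ∧ inter u v w x → E u w ∨ E v w)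
    (hF6 : ∀ u v w x, F u v ∧ E w x ∧ inter u v w x → E u x ∨ E v x)
    (u1 v1 w1 x1 w2 x2 x3 : Pt)
    (h1 : deleting E F u1 v1 w1 x1)
    (h2 : F w1 x1)
    (h3 : deleting E F v1 w1 w2 x2)
    (h4 : F w2 x2)
    (h5 : inside u1 v1 w1 w2)
    (h6 : deleting E F v1 w2 u1 x3)
    (h7 : F u1 x3) :
    False :=
  proof_step9b_general V E F hE1 hE3 hF3 hF4 u1 v1 w1 x1 w2 x2 x3 h1 h2 h3 h4 h5 h6 h7
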